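/- arXiv:2110.01984 — 4 statements merged into one kernel-verified Lean document; each statement's English description precedes it below -/
import Mathlib

section
/- The ratio of Dirichlet densities is unbounded: for α ∈ ℝ^d_{>0}, x = (0,...,0), and x' = (1,0,...,0), the ratio of the density of Dir(x+α) to the density of Dir(x'+α) at a point y in the simplex equals (B(x'+α)/B(x+α)) · (1/y_1), which exceeds e^ε for y_1 sufficiently small, for any ε > 0. Hence Dirichlet posterior sampling is not ε-differentially private for any ε. -/
open Real

/-- The multivariate beta function `B(β) = ∏ i, Γ(β i) / Γ(∑ i, β i)`. -/
noncomputable def mvBeta {d : ℕ} (β : Fin d → ℝ) : ℝ :=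
  (∏ i, Gamma (β i)) / Gamma (∑ i, β i)

/-- The Dirichlet density (wrt the simplex measure) with parameter `β` at `y`. -/
noncomputable def dirDensity {d : ℕ} (β : Fin d → ℝ) (y : Fin d → ℝ) : ℝ :=
  (1 / mvBeta β) * ∏ i, (y i) ^ (β i - 1)

/-!
Raising the first Dirichlet parameter by one multiplies the unnormalised density by `y 0`,
so the ratio of the two densities is a positive constant times `1 / y 0`. Since the open simplex
contains points with `y 0` arbitrarily close to `0`, the ratio exceeds every bound.
-/

lemma mvBeta_pos {d : ℕ} [NeZero d] {β : Fin d → ℝ} (hβ : ∀ i, 0 < β i) : 0 < mvBeta β :=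
  div_pos (Finset.prod_pos fun i _ => Gamma_pos_of_pos (hβ i))
    (Gamma_pos_of_pos (Finset.sum_pos (fun i _ => hβ i) Finset.univ_nonempty))

lemma prod_rpow_single_add_sub_one {ι : Type*} [Fintype ι] [DecidableEq ι]
    {y β : ι → ℝ} (k : ι) (hk : 0 < y k) :
    ∏ i, y i ^ ((Pi.single k 1 + β : ι → ℝ) i - 1) = y k * ∏ i, y i ^ (β i - 1) := by
  have hk_mem := Finset.mem_univ k
  have h_off : ∀ i ∈ Finset.univ.erase k,
      y i ^ ((Pi.single k 1 + β : ι → ℝ) i - 1) = y i ^ (β i - 1) := fun i hi => by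
    simp [Finset.ne_of_mem_erase hi]
  have h_at : y k ^ ((Pi.single k 1 + β : ι → ℝ) k - 1) = y k * y k ^ (β k - 1) := by
    rw [Pi.add_apply, Pi.single_eq_same, add_sub_assoc, rpow_add hk, rpow_one]
  rw [← Finset.mul_prod_erase _ _ hk_mem, ← Finset.mul_prod_erase _ _ hk_mem, h_at,
    Finset.prod_congr rfl h_off, mul_assoc]

lemma dirDensity_div_dirDensity_single_add {d : ℕ} {β y : Fin d → ℝ} (k : Fin d)
    (hy : ∀ i, 0 < y i) :
    dirDensity β y / dirDensity (Pi.single k 1 + β) y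
      = mvBeta (Pi.single k 1 + β) / mvBeta β * (1 / y k) := by
  have hP : ∏ i, y i ^ (β i - 1) ≠ 0 := (Finset.prod_pos fun i _ => rpow_pos_of_pos (hy i) _).ne'
  have hk := (hy k).ne'
  rw [dirDensity, dirDensity, prod_rpow_single_add_sub_one k (hy k)]
  field_simp

lemma exists_pos_sum_eq_one_apply_zero_eq (n : ℕ) {t : ℝ} (ht₀ : 0 < t) (ht₁ : t < 1) :
    ∃ y : Fin (n + 2) → ℝ, (∀ i, 0 < y i) ∧ ∑ i, y i = 1 ∧ y 0 = t := by
  refine ⟨Fin.cons t fun _ => (1 - t) / (n + 1), fun i => ?_, ?_, rfl⟩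
  · refine Fin.cases ht₀ (fun _ => ?_) i
    exact div_pos (sub_pos.2 ht₁) (by positivity)
  · rw [Fin.sum_univ_succ]
    simp only [Fin.cons_zero, Fin.cons_succ, Finset.sum_const, Finset.card_univ,
      Fintype.card_fin, nsmul_eq_mul]
    push_cast
    field_simp
    ring

/-- With `x = (0,…,0)` and `x' = (1,0,…,0)`, the ratio of the `Dir(x+α)` density to
the `Dir(x'+α)` density at a simplex point `y` equals `(B(x'+α)/B(x+α)) · (1/y 0)`,
and for any `ε > 0` there is a simplex point `y` at which this ratio exceeds `e^ε`.
Hence Dirichlet posterior sampling is not `ε`-differentially private for any `ε`. -/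
theorem dirichlet_not_pure_dp (m : ℕ) (α : Fin (m + 2) → ℝ) (hα : ∀ i, 0 < α i)
    (x x' : Fin (m + 2) → ℝ) (hx : x = 0)
    (hx' : x' = fun i => if i = 0 then 1 else 0) :
    (∀ y : Fin (m + 2) → ℝ, (∀ i, 0 < y i) → ∑ i, y i = 1 →
        dirDensity (x + α) y / dirDensity (x' + α) y
          = (mvBeta (x' + α) / mvBeta (x + α)) * (1 / y 0)) ∧
    (∀ ε : ℝ, 0 < ε → ∃ y : Fin (m + 2) → ℝ, (∀ i, 0 < y i) ∧ ∑ i, y i = 1 ∧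
        dirDensity (x + α) y / dirDensity (x' + α) y > exp ε) := by
  have hx'_single : x' = Pi.single 0 1 := hx'.trans (funext fun i => (Pi.single_apply 0 1 i).symm)
  subst hx hx'_single
  rw [zero_add]
  have hratio (y : Fin (m + 2) → ℝ) (hy : ∀ i, 0 < y i) (_ : ∑ i, y i = 1) :=
    dirDensity_div_dirDensity_single_add (β := α) 0 hy
  refine ⟨hratio, fun ε _ => ?_⟩
  set C := mvBeta (Pi.single 0 1 + α) / mvBeta α
  have h_single : (0 : Fin (m + 2) → ℝ) ≤ Pi.single 0 1 := Pi.single_nonneg.2 zero_le_one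
  have hC : 0 < C := div_pos
    (mvBeta_pos fun i => add_pos_of_nonneg_of_pos (h_single i) (hα i)) (mvBeta_pos hα)
  obtain ⟨y, hy, hsum, hy0⟩ := exists_pos_sum_eq_one_apply_zero_eq m (t := C / (C + exp ε))
    (by positivity) ((div_lt_one (by positivity)).2 (lt_add_of_pos_right C (exp_pos ε)))
  refine ⟨y, hy, hsum, ?_⟩
  -- the witness has `y 0 = C / (C + e^ε)`, so the ratio is exactly `C + e^ε`
  rw [hratio y hy hsum, hy0, one_div_div, mul_div_cancel₀ _ hC.ne']
  exact lt_add_of_pos_left _ hC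
end

section
/- For Dirichlet distributions P = Dir(u) and P' = Dir(u') with u, u' ∈ ℝ^d_{>0}, and λ > 1 with u + (λ-1)(u - u') ∈ ℝ^d_{>0} componentwise and Σ_i(u_i + (λ-1)(u_i - u'_i)) > 0, the Rényi divergence satisfies (λ-1) D_λ(P‖P') = Σ_i [(λ-1)(log Γ(u'_i) - log Γ(u_i)) + log Γ(u_i + (λ-1)(u_i - u'_i)) - log Γ(u_i)] - [(λ-1)(log Γ(u'_0) - log Γ(u_0)) + log Γ(u_0 + (λ-1)(u_0 - u'_0)) - log Γ(u_0)], where u_0 = Σ_i u_i and u'_0 = Σ_i u'_i. -/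
/-!
On the simplex, `P ^ λ * P' ^ (1 - λ)` is a constant multiple of the unnormalised Dirichlet
density with the parameter `v = λ u + (1 - λ) u'`, so the integral equals
`B(u) ^ (-λ) * B(u') ^ (λ - 1) * B(v)`. The normalisation `∫ ∏ yᵢ ^ (βᵢ - 1) = B(β)` is
proved by induction on the dimension: integrating out the last free coordinate over
`(0, 1 - ∑ z)` is a scaled Beta integral, which merges the last two parameters into their sum.
-/

open MeasureTheory Real

/-- The Dirichlet density with parameter `β` on the open probability simplex,
parametrized by its first `m` coordinates (the last being `1 - ∑ y i`). -/
noncomputable def dirDens {m : ℕ} (β : Fin (m + 1) → ℝ) (y : Fin m → ℝ) : ℝ :=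
  (Gamma (∑ i, β i) / ∏ i, Gamma (β i)) *
    ((∏ i : Fin m, (y i) ^ (β i.castSucc - 1)) * (1 - ∑ i, y i) ^ (β (Fin.last m) - 1))

open Set
open scoped ENNReal

theorem integral_rpow_mul_sub_rpow {a b c : ℝ} (ha : 0 < a) (hb : 0 < b) (hc : 0 < c) :
    ∫ t in 0..c, t ^ (a - 1) * (c - t) ^ (b - 1) =
      c ^ (a + b - 1) * (Gamma a * Gamma b / Gamma (a + b)) := by
  have hΓ : Complex.Gamma (a + b) ≠ 0 := by
    rw [← Complex.ofReal_add, Complex.Gamma_ofReal]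
    exact_mod_cast (Gamma_pos_of_pos (add_pos ha hb)).ne'
  have hbeta :
      Complex.betaIntegral a b = Complex.Gamma a * Complex.Gamma b / Complex.Gamma (a + b) := by
    rw [Complex.Gamma_mul_Gamma_eq_betaIntegral (by simpa using ha) (by simpa using hb),
      mul_div_cancel_left₀ _ hΓ]
  have hcast : ((∫ t in 0..c, t ^ (a - 1) * (c - t) ^ (b - 1) : ℝ) : ℂ) =
      ∫ t in 0..c, (t : ℂ) ^ ((a : ℂ) - 1) * ((c : ℂ) - t) ^ ((b : ℂ) - 1) := by
    rw [← intervalIntegral.integral_ofReal]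
    refine intervalIntegral.integral_congr fun t ht => ?_
    rw [uIcc_of_le hc.le] at ht
    push_cast [Complex.ofReal_cpow ht.1, Complex.ofReal_cpow (sub_nonneg.2 ht.2)]
    rfl
  apply Complex.ofReal_injective
  rw [hcast, Complex.betaIntegral_scaled _ _ hc, hbeta]
  push_cast [Complex.ofReal_cpow hc.le, ← Complex.Gamma_ofReal]
  rfl

theorem intervalIntegrable_rpow_mul_sub_rpow {a b c : ℝ} (ha : 0 < a) (hb : 0 < b) (hc : 0 < c) :
    IntervalIntegrable (fun t => t ^ (a - 1) * (c - t) ^ (b - 1)) volume 0 c := by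
  have half : ∀ {a b : ℝ}, 0 < a →
      IntervalIntegrable (fun t => t ^ (a - 1) * (c - t) ^ (b - 1)) volume 0 (c / 2) := by
    intro a b ha
    refine (intervalIntegral.intervalIntegrable_rpow' (by linarith)).mul_continuousOn
      (ContinuousOn.rpow_const (by fun_prop) fun t ht => Or.inl ?_)
    rw [uIcc_of_le (by linarith)] at ht
    linarith [ht.2]
  have upper := (half (b := a) hb).comp_sub_left c
  simp only [sub_sub_cancel, sub_zero, sub_half] at upper
  exact (half ha).trans (upper.symm.congr fun t _ => mul_comm _ _)

theorem lintegral_Ioo_rpow_mul_sub_rpow {a b c : ℝ} (ha : 0 < a) (hb : 0 < b) (hc : 0 < c) :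
    ∫⁻ t in Ioo 0 c, ENNReal.ofReal (t ^ (a - 1) * (c - t) ^ (b - 1)) =
      ENNReal.ofReal (c ^ (a + b - 1) * (Gamma a * Gamma b / Gamma (a + b))) := by
  rw [← ofReal_integral_eq_lintegral_ofReal
      ((intervalIntegrable_rpow_mul_sub_rpow ha hb hc).1.mono_set Ioo_subset_Ioc_self),
    ← integral_Ioc_eq_integral_Ioo, ← intervalIntegral.integral_of_le hc.le,
    integral_rpow_mul_sub_rpow ha hb hc]
  filter_upwards [ae_restrict_mem measurableSet_Ioo] with t ht
  exact mul_nonneg (rpow_nonneg ht.1.le _) (rpow_nonneg (sub_nonneg.2 ht.2.le) _)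

theorem lintegral_comp_snoc {α : Type*} [MeasureSpace α] [SigmaFinite (volume : Measure α)]
    {m : ℕ} {f : (Fin (m + 1) → α) → ℝ≥0∞} (hf : Measurable f) :
    ∫⁻ y, f y = ∫⁻ z : Fin m → α, ∫⁻ t : α, f (Fin.snoc z t) := by
  have e := (volume_preserving_piFinSuccAbove (fun _ : Fin (m + 1) => α) (Fin.last m)).symm
  rw [← e.lintegral_comp_emb (MeasurableEquiv.measurableEmbedding _), Measure.volume_eq_prod,
    lintegral_prod_symm (fun p => f ((MeasurableEquiv.piFinSuccAbove _ _).symm p))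
      (hf.comp (MeasurableEquiv.measurable _)).aemeasurable]
  simp only [MeasurableEquiv.piFinSuccAbove_symm_apply, Fin.insertNthEquiv_last]
  rfl

namespace Dirichlet

variable {m : ℕ}

def openSimplex (m : ℕ) : Set (Fin m → ℝ) := {y | (∀ i, 0 < y i) ∧ ∑ i, y i < 1}

noncomputable def unnormDens (β : Fin (m + 1) → ℝ) (y : Fin m → ℝ) : ℝ :=
  (∏ i : Fin m, y i ^ (β i.castSucc - 1)) * (1 - ∑ i, y i) ^ (β (Fin.last m) - 1)

noncomputable def multiBeta {ι : Type*} [Fintype ι] (β : ι → ℝ) : ℝ :=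
  (∏ i, Gamma (β i)) / Gamma (∑ i, β i)

def mergeLastTwo (β : Fin (m + 2) → ℝ) : Fin (m + 1) → ℝ :=
  Fin.snoc (fun j => β j.castSucc.castSucc) (β (Fin.last m).castSucc + β (Fin.last (m + 1)))

theorem measurableSet_openSimplex (m : ℕ) : MeasurableSet (openSimplex m) := by
  unfold openSimplex
  measurability

theorem measurable_unnormDens (β : Fin (m + 1) → ℝ) : Measurable (unnormDens β) := by
  unfold unnormDens
  fun_prop

theorem unnormDens_nonneg (β : Fin (m + 1) → ℝ) {y : Fin m → ℝ}
    (hy : y ∈ openSimplex m) :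
    0 ≤ unnormDens β y :=
  mul_nonneg (Finset.prod_nonneg fun i _ => rpow_nonneg (hy.1 i).le _)
    (rpow_nonneg (by linarith [hy.2]) _)

theorem snoc_mem_openSimplex_iff {z : Fin m → ℝ} {t : ℝ} :
    (Fin.snoc z t : Fin (m + 1) → ℝ) ∈ openSimplex (m + 1) ↔
      z ∈ openSimplex m ∧ t ∈ Ioo 0 (1 - ∑ j, z j) := by
  simp only [openSimplex, mem_ofPred_eq, Fin.forall_fin_succ', Fin.snoc_castSucc, Fin.snoc_last,
    Fin.sum_univ_castSucc, mem_Ioo]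
  constructor
  · rintro ⟨⟨hz, ht⟩, hsum⟩
    exact ⟨⟨hz, by linarith⟩, ht, by linarith⟩
  · rintro ⟨⟨hz, -⟩, ht, htz⟩
    exact ⟨⟨hz, ht⟩, by linarith⟩

theorem unnormDens_snoc (β : Fin (m + 2) → ℝ) (z : Fin m → ℝ) (t : ℝ) :
    unnormDens β (Fin.snoc z t) = (∏ j : Fin m, z j ^ (β j.castSucc.castSucc - 1)) *
      (t ^ (β (Fin.last m).castSucc - 1) * (1 - ∑ j, z j - t) ^ (β (Fin.last (m + 1)) - 1)) := by
  simp only [unnormDens, Fin.prod_univ_castSucc, Fin.sum_univ_castSucc, Fin.snoc_castSucc,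
    Fin.snoc_last, sub_add_eq_sub_sub, mul_assoc]

theorem unnormDens_mergeLastTwo (β : Fin (m + 2) → ℝ) (z : Fin m → ℝ) :
    unnormDens (mergeLastTwo β) z = (∏ j : Fin m, z j ^ (β j.castSucc.castSucc - 1)) *
      (1 - ∑ j, z j) ^ (β (Fin.last m).castSucc + β (Fin.last (m + 1)) - 1) := by
  simp only [unnormDens, mergeLastTwo, Fin.snoc_castSucc, Fin.snoc_last]

theorem multiBeta_eq_multiBeta_mergeLastTwo_mul {β : Fin (m + 2) → ℝ}
    (hβ : Gamma (β (Fin.last m).castSucc + β (Fin.last (m + 1))) ≠ 0) :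
    multiBeta β = multiBeta (mergeLastTwo β) *
      (Gamma (β (Fin.last m).castSucc) * Gamma (β (Fin.last (m + 1))) /
        Gamma (β (Fin.last m).castSucc + β (Fin.last (m + 1)))) := by
  simp only [multiBeta, mergeLastTwo, Fin.prod_univ_castSucc, Fin.sum_univ_castSucc,
    Fin.snoc_castSucc, Fin.snoc_last]
  field_simp
  rw [add_assoc]

theorem mergeLastTwo_pos {β : Fin (m + 2) → ℝ} (hβ : ∀ i, 0 < β i) (i : Fin (m + 1)) :
    0 < mergeLastTwo β i := by
  induction i using Fin.lastCases with
  | last => simpa [mergeLastTwo] using add_pos (hβ _) (hβ _)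
  | cast j => simpa [mergeLastTwo] using hβ _

theorem multiBeta_pos {ι : Type*} [Fintype ι] [Nonempty ι] {β : ι → ℝ} (hβ : ∀ i, 0 < β i) :
    0 < multiBeta β :=
  div_pos (Finset.prod_pos fun i _ => Gamma_pos_of_pos (hβ i))
    (Gamma_pos_of_pos (Finset.sum_pos (fun i _ => hβ i) Finset.univ_nonempty))

theorem log_multiBeta {ι : Type*} [Fintype ι] [Nonempty ι] {β : ι → ℝ} (hβ : ∀ i, 0 < β i) :
    log (multiBeta β) = ∑ i, log (Gamma (β i)) - log (Gamma (∑ i, β i)) := by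
  rw [multiBeta, log_div (Finset.prod_pos fun i _ => Gamma_pos_of_pos (hβ i)).ne'
      (Gamma_pos_of_pos (Finset.sum_pos (fun i _ => hβ i) Finset.univ_nonempty)).ne',
    log_prod fun i _ => (Gamma_pos_of_pos (hβ i)).ne']

theorem lintegral_unnormDens_snoc {β : Fin (m + 2) → ℝ} (hβ : ∀ i, 0 < β i)
    (z : Fin m → ℝ) :
    ∫⁻ t, (openSimplex (m + 1)).indicator (fun y => ENNReal.ofReal (unnormDens β y))
        (Fin.snoc z t) =
      (openSimplex m).indicator (fun z => ENNReal.ofReal (unnormDens (mergeLastTwo β) z *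
        (Gamma (β (Fin.last m).castSucc) * Gamma (β (Fin.last (m + 1))) /
          Gamma (β (Fin.last m).castSucc + β (Fin.last (m + 1)))))) z := by
  by_cases hz : z ∈ openSimplex m
  · have hc : 0 < 1 - ∑ j, z j := sub_pos.2 hz.2
    have hP : 0 ≤ ∏ j : Fin m, z j ^ (β j.castSucc.castSucc - 1) :=
      Finset.prod_nonneg fun j _ => rpow_nonneg (hz.1 j).le _
    have hslice : ∀ t,
        (openSimplex (m + 1)).indicator (fun y => ENNReal.ofReal (unnormDens β y)) (Fin.snoc z t) =
          (Ioo 0 (1 - ∑ j, z j)).indicator (fun t =>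
          ENNReal.ofReal (∏ j : Fin m, z j ^ (β j.castSucc.castSucc - 1)) *
          ENNReal.ofReal (t ^ (β (Fin.last m).castSucc - 1) *
            (1 - ∑ j, z j - t) ^ (β (Fin.last (m + 1)) - 1))) t := by
      intro t
      simp only [indicator, snoc_mem_openSimplex_iff, hz, true_and, unnormDens_snoc,
        ENNReal.ofReal_mul hP]
    rw [lintegral_congr hslice, lintegral_indicator measurableSet_Ioo,
      lintegral_const_mul' _ _ ENNReal.ofReal_ne_top, lintegral_Ioo_rpow_mul_sub_rpow
        (hβ _) (hβ _) hc, ← ENNReal.ofReal_mul hP, indicator_of_mem hz, unnormDens_mergeLastTwo,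
      mul_assoc]
  · rw [indicator_of_notMem hz]
    simp only [indicator, snoc_mem_openSimplex_iff, hz, false_and, if_false, lintegral_zero]

theorem lintegral_unnormDens : ∀ {m : ℕ} {β : Fin (m + 1) → ℝ}, (∀ i, 0 < β i) →
    ∫⁻ y in openSimplex m, ENNReal.ofReal (unnormDens β y) = ENNReal.ofReal (multiBeta β)
  | 0, β, hβ => by
    have hsimplex : openSimplex 0 = univ := by simp [openSimplex]
    have hβ0 : Gamma (β 0) ≠ 0 := (Gamma_pos_of_pos (hβ 0)).ne'
    simp [hsimplex, unnormDens, multiBeta, hβ0, volume_pi]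
  | m + 1, β, hβ => by
    have hK : 0 ≤ Gamma (β (Fin.last m).castSucc) * Gamma (β (Fin.last (m + 1))) /
        Gamma (β (Fin.last m).castSucc + β (Fin.last (m + 1))) :=
      div_nonneg (mul_nonneg (Gamma_pos_of_pos (hβ _)).le (Gamma_pos_of_pos (hβ _)).le)
        (Gamma_pos_of_pos (add_pos (hβ _) (hβ _))).le
    rw [← lintegral_indicator (measurableSet_openSimplex _),
      lintegral_comp_snoc ((measurable_unnormDens β).ennreal_ofReal.indicator
        (measurableSet_openSimplex _)),
      lintegral_congr (lintegral_unnormDens_snoc hβ),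
      lintegral_indicator (measurableSet_openSimplex _)]
    simp only [ENNReal.ofReal_mul' hK]
    rw [lintegral_mul_const' _ _ ENNReal.ofReal_ne_top,
      lintegral_unnormDens (mergeLastTwo_pos hβ), ← ENNReal.ofReal_mul' hK,
      ← multiBeta_eq_multiBeta_mergeLastTwo_mul (Gamma_pos_of_pos (add_pos (hβ _) (hβ _))).ne']

theorem integral_unnormDens {β : Fin (m + 1) → ℝ} (hβ : ∀ i, 0 < β i) :
    ∫ y in openSimplex m, unnormDens β y = multiBeta β := by
  rw [integral_eq_lintegral_of_nonneg_ae
      ((ae_restrict_mem (measurableSet_openSimplex m)).mono fun y hy => unnormDens_nonneg β hy)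
      (measurable_unnormDens β).aestronglyMeasurable,
    lintegral_unnormDens hβ, ENNReal.toReal_ofReal (multiBeta_pos hβ).le]

theorem unnormDens_rpow_mul_rpow (β β' : Fin (m + 1) → ℝ) (l : ℝ) {y : Fin m → ℝ}
    (hy : y ∈ openSimplex m) :
    unnormDens β y ^ l * unnormDens β' y ^ (1 - l) =
      unnormDens (fun i => l * β i + (1 - l) * β' i) y := by
  have hmix : ∀ {x : ℝ}, 0 < x → ∀ p q : ℝ,
      (x ^ (p - 1)) ^ l * (x ^ (q - 1)) ^ (1 - l) = x ^ (l * p + (1 - l) * q - 1) := by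
    intro x hx p q
    rw [← rpow_mul hx.le, ← rpow_mul hx.le, ← rpow_add hx]
    ring_nf
  have hlast : 0 < 1 - ∑ i, y i := sub_pos.2 hy.2
  have hprod : ∀ γ : Fin (m + 1) → ℝ, 0 ≤ ∏ i : Fin m, y i ^ (γ i.castSucc - 1) := fun γ =>
    Finset.prod_nonneg fun i _ => rpow_nonneg (hy.1 i).le _
  simp only [unnormDens]
  rw [mul_rpow (hprod β) (rpow_nonneg hlast.le _), mul_rpow (hprod β') (rpow_nonneg hlast.le _),
    ← finsetProd_rpow _ _ (fun i _ => rpow_nonneg (hy.1 i).le _),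
    ← finsetProd_rpow _ _ (fun i _ => rpow_nonneg (hy.1 i).le _),
    mul_mul_mul_comm, ← Finset.prod_mul_distrib, hmix hlast]
  simp only [hmix (hy.1 _)]

theorem dirDens_eq_inv_mul_unnormDens (β : Fin (m + 1) → ℝ) (y : Fin m → ℝ) :
    dirDens β y = (multiBeta β)⁻¹ * unnormDens β y := by
  rw [multiBeta, inv_div]
  rfl

theorem dirDens_rpow_mul_rpow {β β' : Fin (m + 1) → ℝ} (hβ : ∀ i, 0 < β i)
    (hβ' : ∀ i, 0 < β' i) (l : ℝ) {y : Fin m → ℝ} (hy : y ∈ openSimplex m) :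
    dirDens β y ^ l * dirDens β' y ^ (1 - l) =
      (multiBeta β ^ l)⁻¹ * (multiBeta β' ^ (1 - l))⁻¹ *
        unnormDens (fun i => l * β i + (1 - l) * β' i) y := by
  have hB := (multiBeta_pos hβ).le
  have hB' := (multiBeta_pos hβ').le
  rw [dirDens_eq_inv_mul_unnormDens, dirDens_eq_inv_mul_unnormDens,
    mul_rpow (inv_nonneg.2 hB) (unnormDens_nonneg β hy),
    mul_rpow (inv_nonneg.2 hB') (unnormDens_nonneg β' hy),
    inv_rpow hB, inv_rpow hB', mul_mul_mul_comm, unnormDens_rpow_mul_rpow β β' l hy]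

end Dirichlet

open Dirichlet in
theorem dirichlet_renyi_identity_general (m : ℕ) (u u' : Fin (m + 1) → ℝ)
    (hu : ∀ i, 0 < u i) (hu' : ∀ i, 0 < u' i) (l : ℝ)
    (hpos : ∀ i, 0 < u i + (l - 1) * (u i - u' i)) :
    Real.log (∫ y in {y : Fin m → ℝ | (∀ i, 0 < y i) ∧ ∑ i, y i < 1},
        (dirDens u y) ^ l * (dirDens u' y) ^ (1 - l))
      = (∑ i, ((l - 1) * (Real.log (Gamma (u' i)) - Real.log (Gamma (u i)))
            + Real.log (Gamma (u i + (l - 1) * (u i - u' i))) - Real.log (Gamma (u i))))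
        - ((l - 1) * (Real.log (Gamma (∑ i, u' i)) - Real.log (Gamma (∑ i, u i)))
            + Real.log (Gamma ((∑ i, u i) + (l - 1) * ((∑ i, u i) - ∑ i, u' i)))
            - Real.log (Gamma (∑ i, u i))) := by
  set v : Fin (m + 1) → ℝ := fun i => u i + (l - 1) * (u i - u' i)
  have hmix : (fun i => l * u i + (1 - l) * u' i) = v := funext fun i => by ring
  have hvsum : ∑ i, v i = (∑ i, u i) + (l - 1) * ((∑ i, u i) - ∑ i, u' i) := by
    simp only [v, Finset.sum_add_distrib, ← Finset.mul_sum, Finset.sum_sub_distrib]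
  have hint : ∫ y in openSimplex m, dirDens u y ^ l * dirDens u' y ^ (1 - l) =
      (multiBeta u ^ l)⁻¹ * (multiBeta u' ^ (1 - l))⁻¹ * multiBeta v := by
    rw [setIntegral_congr_fun (measurableSet_openSimplex m)
      fun y hy => dirDens_rpow_mul_rpow hu hu' l hy, integral_const_mul, hmix,
      integral_unnormDens hpos]
  have hBu := multiBeta_pos hu
  have hBu' := multiBeta_pos hu'
  change Real.log (∫ y in openSimplex m, _) = _
  rw [hint, log_mul (by positivity) (multiBeta_pos hpos).ne',
    log_mul (by positivity) (by positivity), log_inv, log_inv, log_rpow hBu, log_rpow hBu',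
    log_multiBeta hu, log_multiBeta hu', log_multiBeta hpos, hvsum]
  simp only [Finset.sum_add_distrib, Finset.sum_sub_distrib, ← Finset.mul_sum]
  ring

/-- The Rényi divergence identity for Dirichlet distributions `P = Dir(u)`,
`P' = Dir(u')`: `(λ-1) D_λ(P‖P') = log ∫ P(y)^λ P'(y)^{1-λ} dy` equals the stated
combination of log-gamma values. -/
theorem dirichlet_renyi_identity (m : ℕ) (u u' : Fin (m + 1) → ℝ)
    (hu : ∀ i, 0 < u i) (hu' : ∀ i, 0 < u' i) (l : ℝ) (hl : 1 < l)
    (hpos : ∀ i, 0 < u i + (l - 1) * (u i - u' i))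
    (hpos0 : 0 < ∑ i, (u i + (l - 1) * (u i - u' i))) :
    Real.log (∫ y in {y : Fin m → ℝ | (∀ i, 0 < y i) ∧ ∑ i, y i < 1},
        (dirDens u y) ^ l * (dirDens u' y) ^ (1 - l))
      = (∑ i, ((l - 1) * (Real.log (Gamma (u' i)) - Real.log (Gamma (u i)))
            + Real.log (Gamma (u i + (l - 1) * (u i - u' i))) - Real.log (Gamma (u i))))
        - ((l - 1) * (Real.log (Gamma (∑ i, u' i)) - Real.log (Gamma (∑ i, u i)))
            + Real.log (Gamma ((∑ i, u i) + (l - 1) * ((∑ i, u i) - ∑ i, u' i)))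
            - Real.log (Gamma (∑ i, u i))) :=
  dirichlet_renyi_identity_general m u u' hu hu' l hpos
end

section
/- For any a, b > 0 and λ > 1 with a + (λ-1)(a-b) > 0, the quantity (λ-1)(log Γ(b) - log Γ(a)) + log Γ(a + (λ-1)(a-b)) - log Γ(a) is nonnegative. -/
/-! `log ∘ Γ` is convex on `(0, ∞)`, and `a` is the convex combination of `b` and
`a + (λ - 1)(a - b)` with weights `(λ - 1)/λ` and `1/λ`; the inequality is Jensen's inequality
for these two points, multiplied by `λ`. -/

open Real

theorem ConvexOn.one_add_mul_le_of_extrapolation {E : Type*} [AddCommGroup E] [Module ℝ E]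
    {s : Set E} {f : E → ℝ} (hf : ConvexOn ℝ s f) {x y : E} {t : ℝ} (ht : 0 ≤ t)
    (hy : y ∈ s) (hz : x + t • (x - y) ∈ s) :
    (1 + t) * f x ≤ t * f y + f (x + t • (x - y)) := by
  have ht₁ : 0 < 1 + t := by linarith
  have hx : (t / (1 + t)) • y + (1 / (1 + t)) • (x + t • (x - y)) = x := by
    rw [smul_add, smul_smul, ← sub_eq_zero]
    match_scalars <;> field_simp <;> ring
  have jensen : f ((t / (1 + t)) • y + (1 / (1 + t)) • (x + t • (x - y)))
      ≤ (t / (1 + t)) • f y + (1 / (1 + t)) • f (x + t • (x - y)) :=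
    hf.2 hy hz (by positivity) (by positivity) (by field_simp; ring)
  rw [hx, smul_eq_mul, smul_eq_mul] at jensen
  calc (1 + t) * f x
      ≤ (1 + t) * (t / (1 + t) * f y + 1 / (1 + t) * f (x + t • (x - y))) := by gcongr
    _ = t * f y + f (x + t • (x - y)) := by field_simp

theorem logGamma_combination_nonneg_general (a b l : ℝ) (hb : 0 < b) (hl : 1 < l)
    (hpos : 0 < a + (l - 1) * (a - b)) :
    0 ≤ (l - 1) * (Real.log (Gamma b) - Real.log (Gamma a))
          + Real.log (Gamma (a + (l - 1) * (a - b))) - Real.log (Gamma a) := by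
  have key := convexOn_log_Gamma.one_add_mul_le_of_extrapolation (sub_nonneg.2 hl.le)
    (Set.mem_Ioi.2 hb) (Set.mem_Ioi.2 hpos)
  simp only [Function.comp_apply, smul_eq_mul] at key
  linarith

/-- For `a, b > 0` and `λ > 1` with `a + (λ-1)(a-b) > 0`, the quantity
`(λ-1)(log Γ(b) - log Γ(a)) + log Γ(a + (λ-1)(a-b)) - log Γ(a)` is nonnegative. -/
theorem logGamma_combination_nonneg (a b l : ℝ) (ha : 0 < a) (hb : 0 < b) (hl : 1 < l)
    (hpos : 0 < a + (l - 1) * (a - b)) :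
    0 ≤ (l - 1) * (Real.log (Gamma b) - Real.log (Gamma a))
          + Real.log (Gamma (a + (l - 1) * (a - b))) - Real.log (Gamma a) :=
  logGamma_combination_nonneg_general a b l hb hl hpos
end

section
/- The function f(λ) = (λ-1)(ε̂(λ) - ε) + (λ-1)log(λ-1) - λ log λ, where ε̂(λ) = (λ/2)Δ_2² ψ'(α_m - (λ-1)Δ_∞), is strictly convex on the interval (1, α_m/Δ_∞ + 1), for any constants ε, Δ_2, Δ_∞, α_m > 0. -/
open Real

/-- The trigamma function `ψ'`, via its series representation. -/
noncomputable def trigamma (x : ℝ) : ℝ := ∑' n : ℕ, 1 / (x + n) ^ 2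

open Set

/-!
Split the function as `(Δ₂²/2)·(λ-1)λ·ψ'(α_m - (λ-1)Δ_∞) + [(λ-1)log(λ-1) - λ log λ] - ε(λ-1)`.
On the interval, `(λ-1)λ` and `ψ'(α_m - (λ-1)Δ_∞)` are nonnegative, convex and increasing (the
latter because `ψ'` is convex and decreasing on `(0, ∞)`, termwise in its series, and its argument
decreases affinely), so their product is convex. The bracket is strictly convex because its
derivative `log(λ-1) - log λ = log(1 - 1/λ)` is strictly increasing, and the last term is affine.
-/

theorem convexOn_tsum {ι E : Type*} [AddCommGroup E] [Module ℝ E] {s : Set E}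
    {f : ι → E → ℝ} (hs : Convex ℝ s) (hf : ∀ i, ConvexOn ℝ s (f i))
    (hsum : ∀ x ∈ s, Summable fun i => f i x) : ConvexOn ℝ s fun x => ∑' i, f i x := by
  refine ⟨hs, fun x hx y hy a b ha hb hab => ?_⟩
  have hax := (hsum x hx).mul_left a
  have hby := (hsum y hy).mul_left b
  calc ∑' i, f i (a • x + b • y) ≤ ∑' i, (a * f i x + b * f i y) :=
        (hsum _ (hs hx hy ha hb hab)).tsum_le_tsum (fun i => (hf i).2 hx hy ha hb hab)
          (hax.add hby)
    _ = a • ∑' i, f i x + b • ∑' i, f i y := by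
        rw [hax.tsum_add hby, tsum_mul_left, tsum_mul_left, smul_eq_mul, smul_eq_mul]

theorem convexOn_one_div_add_sq {c : ℝ} (hc : 0 ≤ c) :
    ConvexOn ℝ (Ioi 0) fun x : ℝ => 1 / (x + c) ^ 2 := by
  have h := ((convexOn_zpow (𝕜 := ℝ) (-2)).translate_right c).subset
    (fun x (hx : 0 < x) => show 0 < c + x by positivity) (convex_Ioi 0)
  refine h.congr fun x _ => ?_
  simp [add_comm, zpow_neg]

theorem summable_one_div_add_sq {x : ℝ} (hx : 0 < x) :
    Summable fun n : ℕ => 1 / (x + n) ^ 2 := by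
  rw [← summable_nat_add_iff 1]
  have hbase : Summable fun n : ℕ => 1 / ((n + 1 : ℕ) : ℝ) ^ 2 :=
    (summable_nat_add_iff 1).mpr (summable_one_div_nat_pow.mpr one_lt_two)
  refine hbase.of_nonneg_of_le (fun n => by positivity) fun n => ?_
  gcongr
  linarith

theorem trigamma_nonneg (x : ℝ) : 0 ≤ trigamma x :=
  tsum_nonneg fun n => by positivity

theorem antitoneOn_trigamma : AntitoneOn trigamma (Ioi 0) := by
  intro x (hx : 0 < x) y (hy : 0 < y) hxy
  refine (summable_one_div_add_sq hy).tsum_le_tsum (fun n => ?_) (summable_one_div_add_sq hx)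
  gcongr

theorem convexOn_trigamma : ConvexOn ℝ (Ioi 0) trigamma :=
  convexOn_tsum (convex_Ioi 0) (fun n => convexOn_one_div_add_sq n.cast_nonneg)
    fun _ hx => summable_one_div_add_sq hx

section

variable {α Δ : ℝ}

theorem mapsTo_sub_sub_one_mul (hΔ : 0 < Δ) :
    MapsTo (fun l => α - (l - 1) * Δ) (Iio (α / Δ + 1)) (Ioi 0) := by
  intro l (hl : l < α / Δ + 1)
  exact sub_pos.2 ((lt_div_iff₀ hΔ).mp (by linarith))

theorem convexOn_trigamma_sub_sub_one_mul (hΔ : 0 < Δ) :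
    ConvexOn ℝ (Iio (α / Δ + 1)) fun l => trigamma (α - (l - 1) * Δ) := by
  let g : ℝ →ᵃ[ℝ] ℝ := AffineMap.const ℝ ℝ (α + Δ) - Δ • AffineMap.id ℝ ℝ
  have hg : ∀ l, g l = α - (l - 1) * Δ := fun l => by
    simp only [g, AffineMap.coe_sub, AffineMap.coe_const, AffineMap.coe_smul, AffineMap.coe_id,
      Pi.sub_apply, Function.const_apply, Pi.smul_apply, id_eq, smul_eq_mul]
    ring
  refine ((convexOn_trigamma.comp_affineMap g).subset (fun l hl => ?_) (convex_Iio _)).congr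
    fun l _ => by simp [hg]
  simpa [hg] using mapsTo_sub_sub_one_mul hΔ hl

theorem monotoneOn_trigamma_sub_sub_one_mul (hΔ : 0 < Δ) :
    MonotoneOn (fun l => trigamma (α - (l - 1) * Δ)) (Iio (α / Δ + 1)) :=
  fun x hx y hy hxy => antitoneOn_trigamma (mapsTo_sub_sub_one_mul hΔ hy)
    (mapsTo_sub_sub_one_mul hΔ hx) (by nlinarith)

theorem convexOn_sub_one_mul_self_mul_trigamma (hΔ : 0 < Δ) :
    ConvexOn ℝ (Ioo 1 (α / Δ + 1)) fun l => (l - 1) * l * trigamma (α - (l - 1) * Δ) := by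
  have hq : ConvexOn ℝ (Ioo 1 (α / Δ + 1)) fun l : ℝ => (l - 1) * l := by
    refine ⟨convex_Ioo _ _, fun x _ y _ a b ha hb hab => ?_⟩
    obtain rfl : b = 1 - a := by linarith
    simp only [smul_eq_mul]
    nlinarith [mul_nonneg (mul_nonneg ha hb) (sq_nonneg (x - y))]
  have hqmono : MonotoneOn (fun l : ℝ => (l - 1) * l) (Ioo 1 (α / Δ + 1)) :=
    fun x hx y _ hxy => by nlinarith [hx.1]
  have hsub : Ioo 1 (α / Δ + 1) ⊆ Iio (α / Δ + 1) := Ioo_subset_Iio_self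
  have hT := (convexOn_trigamma_sub_sub_one_mul hΔ).subset hsub (convex_Ioo _ _)
  have hTmono := (monotoneOn_trigamma_sub_sub_one_mul hΔ).mono hsub
  exact hq.mul hT (fun l hl => by nlinarith [hl.1]) (fun l _ => trigamma_nonneg _)
    (hqmono.monovaryOn hTmono)

end

theorem hasDerivAt_sub_one_mul_log_sub_one_sub_mul_log {x : ℝ} (hx : 1 < x) :
    HasDerivAt (fun l => (l - 1) * log (l - 1) - l * log l) (log (x - 1) - log x) x := by
  have h := (hasDerivAt_mul_log (sub_pos.2 hx).ne').comp_sub_const x 1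
  exact (h.sub (hasDerivAt_mul_log (by positivity : x ≠ 0))).congr_deriv (by ring)

theorem strictMonoOn_log_sub_one_sub_log :
    StrictMonoOn (fun x => log (x - 1) - log x) (Ioi 1) := by
  intro x (hx : 1 < x) y (hy : 1 < y) hxy
  dsimp only
  rw [← log_div (by linarith) (by linarith), ← log_div (by linarith) (by linarith)]
  refine log_lt_log (div_pos (by linarith) (by linarith)) ?_
  rw [div_lt_div_iff₀ (by linarith) (by linarith)]
  linarith

theorem strictConvexOn_sub_one_mul_log_sub_one_sub_mul_log :
    StrictConvexOn ℝ (Ioi 1) fun l => (l - 1) * log (l - 1) - l * log l := by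
  have hderiv := @hasDerivAt_sub_one_mul_log_sub_one_sub_mul_log
  refine StrictMonoOn.strictConvexOn_of_deriv (convex_Ioi 1)
    (fun x hx => (hderiv hx).continuousAt.continuousWithinAt) ?_
  rw [interior_Ioi]
  exact strictMonoOn_log_sub_one_sub_log.congr fun x hx => (hderiv hx).deriv.symm

theorem f_strictConvexOn_general (ε Δ2 Δinf αm : ℝ)
    (hΔinf : 0 < Δinf) :
    StrictConvexOn ℝ (Set.Ioo (1 : ℝ) (αm / Δinf + 1))
      (fun l : ℝ =>
        (l - 1) * ((l / 2) * Δ2 ^ 2 * trigamma (αm - (l - 1) * Δinf) - ε)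
          + (l - 1) * Real.log (l - 1) - l * Real.log l) := by
  have hconv := (convexOn_sub_one_mul_self_mul_trigamma (α := αm) hΔinf).smul
    (by positivity : 0 ≤ Δ2 ^ 2 / 2)
  have hent := strictConvexOn_sub_one_mul_log_sub_one_sub_mul_log.subset Ioo_subset_Ioi_self
    (convex_Ioo 1 (αm / Δinf + 1))
  have hlin : ConcaveOn ℝ (Ioo 1 (αm / Δinf + 1)) fun l => ε * (l - 1) :=
    ⟨convex_Ioo _ _, fun x _ y _ a b _ _ hab => le_of_eq <| by
      simp only [smul_eq_mul]; linear_combination (-ε) * hab⟩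
  refine ((hconv.add_strictConvexOn hent).sub_concaveOn hlin).congr fun l _ => ?_
  simp only [Pi.add_apply, Pi.sub_apply, smul_eq_mul]
  ring

/-- The function `f(λ) = (λ-1)(ε̂(λ) - ε) + (λ-1)log(λ-1) - λ log λ`, with
`ε̂(λ) = (λ/2) Δ₂² ψ'(α_m - (λ-1) Δ_∞)`, is strictly convex on
`(1, α_m/Δ_∞ + 1)`. -/
theorem f_strictConvexOn (ε Δ2 Δinf αm : ℝ)
    (hε : 0 < ε) (hΔ2 : 0 < Δ2) (hΔinf : 0 < Δinf) (hαm : 0 < αm) :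
    StrictConvexOn ℝ (Set.Ioo (1 : ℝ) (αm / Δinf + 1))
      (fun l : ℝ =>
        (l - 1) * ((l / 2) * Δ2 ^ 2 * trigamma (αm - (l - 1) * Δinf) - ε)
          + (l - 1) * Real.log (l - 1) - l * Real.log l) :=
  f_strictConvexOn_general ε Δ2 Δinf αm hΔinf
end
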